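/- Let (z_j)_{j∈ℕ} be a sequence in the unit ball 𝔹_d ⊂ ℂ^d that is weakly separated, i.e., inf_{j≠k} ρ(z_j,z_k) > 0. Then (z_j) is uniformly separated, i.e., inf_k ∏_{j≠k} ρ(z_j,z_k) > 0, if and only if sup_k ∑_{j≠k} (1 − ρ(z_j,z_k)²) < ∞. Moreover, the implication that uniform separation implies sup_k ∑_{j≠k} (1 − ρ(z_j,z_k)²) < ∞ holds for every sequence in 𝔹_d, without any weak separation assumption. -/

import Mathlib

open MeasureTheory ProbabilityTheory ENNReal

noncomputable section

/-- We endow `EuclideanSpace ℂ (Fin d)` with its Borel `σ`-algebra. -/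
instance (d : ℕ) : MeasurableSpace (EuclideanSpace ℂ (Fin d)) := borel _

instance (d : ℕ) : BorelSpace (EuclideanSpace ℂ (Fin d)) := ⟨rfl⟩

/-- The pseudo-hyperbolic distance `ρ(z,w) = |φ_z(w)|` on the unit ball `𝔹_d ⊂ ℂ^d`, defined
via the identity `1 - ρ(z,w)² = (1-|z|²)(1-|w|²)/|1-⟨w,z⟩|²`. -/
def ballRho {d : ℕ} (z w : EuclideanSpace ℂ (Fin d)) : ℝ :=
  Real.sqrt (1 - (1 - ‖z‖ ^ 2) * (1 - ‖w‖ ^ 2) / ‖(1 - @inner ℂ _ _ w z)‖ ^ 2)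

/-- A random sequence `λ_j = ρ_j ξ_j` in the unit ball `𝔹_d ⊂ ℂ^d`: deterministic radii
`ρ_j ∈ [0,1)` and an independent sequence `(ξ_j)` of random variables uniformly distributed
on the unit sphere.  Uniformity is expressed by invariance of the distribution of each `ξ_j`
under every unitary transformation, which uniquely characterizes the normalized surface
measure among probability distributions supported on the sphere. -/
structure RandomBallSeq (d : ℕ) (Ω : Type*) [MeasurableSpace Ω]
    (P : MeasureTheory.Measure Ω) where
  rad : ℕ → ℝ
  rad_mem : ∀ j, rad j ∈ Set.Ico (0 : ℝ) 1
  ξ : ℕ → Ω → EuclideanSpace ℂ (Fin d)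
  ξ_meas : ∀ j, Measurable (ξ j)
  ξ_sphere : ∀ j ω, ‖ξ j ω‖ = 1
  ξ_indep : iIndepFun ξ P
  ξ_unif : ∀ (j : ℕ) (U : EuclideanSpace ℂ (Fin d) ≃ₗᵢ[ℂ] EuclideanSpace ℂ (Fin d)),
      MeasureTheory.Measure.map (fun ω => U (ξ j ω)) P = MeasureTheory.Measure.map (ξ j) P

namespace RandomBallSeq

variable {d : ℕ} {Ω : Type*} [MeasurableSpace Ω] {P : MeasureTheory.Measure Ω}

/-- The random point `λ_j(ω) = ρ_j ξ_j(ω) ∈ 𝔹_d`. -/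
def pt (Λ : RandomBallSeq d Ω P) (j : ℕ) (ω : Ω) : EuclideanSpace ℂ (Fin d) :=
  Λ.rad j • Λ.ξ j ω

/-- `N_m = #{j : m (ln 2)/2 ≤ β(0, λ_j) < (m+1)(ln 2)/2}` where
`β(0,z) = (1/2) log((1+|z|)/(1-|z|))` is the Bergman distance from the origin; since
`|λ_j| = ρ_j`, this is deterministic. -/
def N (Λ : RandomBallSeq d Ω P) (m : ℕ) : ℝ≥0∞ :=
  ({j : ℕ |
      (m : ℝ) * Real.log 2 / 2 ≤ (1 / 2) * Real.log ((1 + Λ.rad j) / (1 - Λ.rad j)) ∧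
      (1 / 2) * Real.log ((1 + Λ.rad j) / (1 - Λ.rad j)) < ((m : ℝ) + 1) * Real.log 2 / 2
    }).encard

/-- The realization `Λ(ω)` is uniformly separated: `inf_k ∏_{j ≠ k} ρ(λ_j, λ_k) > 0`.
Since the factors lie in `[0,1)`, the infinite product is the infimum of its finite partial
products, so this is expressed via finite subproducts. -/
def UniformlySeparated (Λ : RandomBallSeq d Ω P) (ω : Ω) : Prop :=
  ∃ c > (0 : ℝ), ∀ k : ℕ, ∀ F : Finset ℕ, k ∉ F →
    c ≤ ∏ j ∈ F, ballRho (Λ.pt j ω) (Λ.pt k ω)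

end RandomBallSeq

/-!
Since `ρ ∈ [0, 1]`, the quantities `1 - ρ²` and `-log ρ` are comparable: `1 - ρ² ≤ -2 log ρ`
always, and `-log ρ ≤ (1 - ρ²) / c` once `ρ ≥ c > 0`. Taking logarithms turns a lower bound
`c` on the products `∏_{j ∈ F} ρ(z_j, z_k)` into an upper bound `-2 log c` on the sums
`∑_{j ∈ F} (1 - ρ(z_j, z_k)²)`, and under weak separation with constant `c₀` a bound `M` on
these sums gives back the lower bound `exp (-M / c₀)` on the products.
-/

open Real

lemma one_sub_sq_le_neg_two_mul_log {x : ℝ} (hx : 0 < x) :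
    1 - x ^ 2 ≤ -2 * log x := by
  have h := log_le_sub_one_of_pos (pow_pos hx 2)
  rw [Real.log_pow] at h
  push_cast at h
  linarith

lemma neg_log_le_one_sub_sq_div {c x : ℝ} (hc : 0 < c) (hcx : c ≤ x) (hx : x ≤ 1) :
    -log x ≤ (1 - x ^ 2) / c := by
  have hx0 : 0 < x := hc.trans_le hcx
  have hlog : -log x * x ≤ 1 - x := by
    have h := mul_le_mul_of_nonneg_right (log_le_sub_one_of_pos (inv_pos.2 hx0)) hx0.le
    rwa [Real.log_inv, sub_mul, inv_mul_cancel₀ hx0.ne', one_mul] at h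
  rw [le_div_iff₀ hc]
  nlinarith [mul_nonneg (neg_nonneg.2 (log_nonpos hx0.le hx)) (sub_nonneg.2 hcx),
    mul_nonneg hx0.le (sub_nonneg.2 hx)]

section FiniteProducts

variable {ι : Type*} {s : Finset ι} {f : ι → ℝ}

lemma sum_one_sub_sq_le_of_le_prod {c : ℝ} (hc : 0 < c) (hf0 : ∀ j ∈ s, 0 ≤ f j)
    (h : c ≤ ∏ j ∈ s, f j) : ∑ j ∈ s, (1 - f j ^ 2) ≤ -2 * log c := by
  have hpos : ∀ j ∈ s, 0 < f j := fun j hj => (hf0 j hj).lt_of_ne fun hfj => by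
    rw [Finset.prod_eq_zero hj hfj.symm] at h
    exact hc.not_ge h
  calc ∑ j ∈ s, (1 - f j ^ 2)
      ≤ ∑ j ∈ s, -2 * log (f j) :=
        Finset.sum_le_sum fun j hj => one_sub_sq_le_neg_two_mul_log (hpos j hj)
    _ = -2 * log (∏ j ∈ s, f j) := by
        rw [log_prod fun j hj => (hpos j hj).ne', Finset.mul_sum]
    _ ≤ -2 * log c := by
        nlinarith [log_le_log hc h]

lemma exp_neg_div_le_prod_of_sum_one_sub_sq_le {c M : ℝ} (hc : 0 < c)
    (hcf : ∀ j ∈ s, c ≤ f j) (hf1 : ∀ j ∈ s, f j ≤ 1)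
    (h : ∑ j ∈ s, (1 - f j ^ 2) ≤ M) : exp (-(M / c)) ≤ ∏ j ∈ s, f j := by
  have hpos : ∀ j ∈ s, 0 < f j := fun j hj => hc.trans_le (hcf j hj)
  have hlog : -(M / c) ≤ ∑ j ∈ s, log (f j) := by
    have hsum : ∑ j ∈ s, -log (f j) ≤ M / c :=
      calc ∑ j ∈ s, -log (f j)
          ≤ ∑ j ∈ s, (1 - f j ^ 2) / c :=
            Finset.sum_le_sum fun j hj => neg_log_le_one_sub_sq_div hc (hcf j hj) (hf1 j hj)
        _ ≤ M / c := by
            rw [← Finset.sum_div]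
            exact div_le_div_of_nonneg_right h hc.le
    rw [Finset.sum_neg_distrib] at hsum
    linarith
  calc exp (-(M / c)) ≤ exp (∑ j ∈ s, log (f j)) := exp_le_exp.2 hlog
    _ = ∏ j ∈ s, f j := by
        rw [exp_sum]
        exact Finset.prod_congr rfl fun j hj => exp_log (hpos j hj)

end FiniteProducts

lemma iSup_tsum_offDiag_lt_top_iff {ι : Type*} [DecidableEq ι] {a : ι → ι → ℝ}
    (ha : ∀ j k, 0 ≤ a j k) :
    (⨆ k, ∑' j, if j = k then 0 else ENNReal.ofReal (a j k)) < ⊤ ↔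
      ∃ M : ℝ, ∀ k (F : Finset ι), k ∉ F → ∑ j ∈ F, a j k ≤ M := by
  have hsum_eq : ∀ k (F : Finset ι), k ∉ F →
      ∑ j ∈ F, (if j = k then 0 else ENNReal.ofReal (a j k)) =
        ENNReal.ofReal (∑ j ∈ F, a j k) := fun k F hkF => by
    rw [ENNReal.ofReal_sum_of_nonneg fun j _ => ha j k]
    exact Finset.sum_congr rfl fun j hj => if_neg (ne_of_mem_of_not_mem hj hkF)
  constructor
  · intro hS
    refine ⟨(⨆ k, ∑' j, if j = k then 0 else ENNReal.ofReal (a j k)).toReal,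
      fun k F hkF => (ENNReal.ofReal_le_iff_le_toReal hS.ne).1 ?_⟩
    rw [← hsum_eq k F hkF]
    exact (ENNReal.sum_le_tsum F).trans
      (le_iSup (fun k => ∑' j, if j = k then 0 else ENNReal.ofReal (a j k)) k)
  · rintro ⟨M, hM⟩
    refine lt_of_le_of_lt (iSup_le fun k => ?_) (ENNReal.ofReal_lt_top (r := M))
    rw [ENNReal.tsum_eq_iSup_sum]
    refine iSup_le fun G => ?_
    have hG : ∑ j ∈ G, (if j = k then 0 else ENNReal.ofReal (a j k)) =
        ∑ j ∈ G.erase k, (if j = k then 0 else ENNReal.ofReal (a j k)) :=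
      (Finset.sum_erase G (f := fun j => if j = k then 0 else ENNReal.ofReal (a j k))
        (if_pos rfl)).symm
    rw [hG, hsum_eq k _ (Finset.notMem_erase k G)]
    exact ENNReal.ofReal_le_ofReal (hM k _ (Finset.notMem_erase k G))

lemma ballRho_nonneg {d : ℕ} (z w : EuclideanSpace ℂ (Fin d)) : 0 ≤ ballRho z w :=
  sqrt_nonneg _

lemma ballRho_le_one {d : ℕ} {z w : EuclideanSpace ℂ (Fin d)} (hz : ‖z‖ < 1) (hw : ‖w‖ < 1) :
    ballRho z w ≤ 1 := by
  have hfrac : 0 ≤ (1 - ‖z‖ ^ 2) * (1 - ‖w‖ ^ 2) / ‖1 - @inner ℂ _ _ w z‖ ^ 2 := by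
    have : 0 ≤ (1 - ‖z‖ ^ 2) * (1 - ‖w‖ ^ 2) := by
      apply mul_nonneg <;> nlinarith [norm_nonneg z, norm_nonneg w]
    positivity
  exact sqrt_le_one.2 (by linarith)

lemma one_sub_ballRho_sq_nonneg {d : ℕ} {z w : EuclideanSpace ℂ (Fin d)} (hz : ‖z‖ < 1)
    (hw : ‖w‖ < 1) : 0 ≤ 1 - ballRho z w ^ 2 := by
  nlinarith [ballRho_nonneg z w, ballRho_le_one hz hw]

lemma iSup_tsum_one_sub_ballRho_sq_lt_top {d : ℕ} (w : ℕ → EuclideanSpace ℂ (Fin d))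
    (hw : ∀ j, ‖w j‖ < 1)
    (h : ∃ c > (0 : ℝ), ∀ k : ℕ, ∀ F : Finset ℕ, k ∉ F → c ≤ ∏ j ∈ F, ballRho (w j) (w k)) :
    (⨆ k : ℕ, ∑' j : ℕ,
        if j = k then 0 else ENNReal.ofReal (1 - ballRho (w j) (w k) ^ 2)) < ⊤ := by
  obtain ⟨c, hc, hprod⟩ := h
  rw [iSup_tsum_offDiag_lt_top_iff fun j k => one_sub_ballRho_sq_nonneg (hw j) (hw k)]
  exact ⟨-2 * log c, fun k F hkF => sum_one_sub_sq_le_of_le_prod hc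
    (fun j _ => ballRho_nonneg _ _) (hprod k F hkF)⟩

/-- A weakly separated sequence in `𝔹_d` is uniformly separated if and only if
`sup_k ∑_{j ≠ k} (1 - ρ(z_j,z_k)²) < ∞`; moreover, the forward implication (uniform separation
implies finiteness of the supremum) holds for every sequence in `𝔹_d`, with no weak separation
assumption. -/
theorem uniform_separation_iff_sum_ball (d : ℕ)
    (z : ℕ → EuclideanSpace ℂ (Fin d)) (hz : ∀ j, ‖z j‖ < 1)
    (hweak : ∃ c > (0 : ℝ), ∀ j k : ℕ, j ≠ k → c ≤ ballRho (z j) (z k)) :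
    ((∃ c > (0 : ℝ), ∀ k : ℕ, ∀ F : Finset ℕ, k ∉ F →
        c ≤ ∏ j ∈ F, ballRho (z j) (z k)) ↔
      (⨆ k : ℕ, ∑' j : ℕ,
        if j = k then 0 else ENNReal.ofReal (1 - ballRho (z j) (z k) ^ 2)) < ⊤) ∧
    (∀ w : ℕ → EuclideanSpace ℂ (Fin d), (∀ j, ‖w j‖ < 1) →
      (∃ c > (0 : ℝ), ∀ k : ℕ, ∀ F : Finset ℕ, k ∉ F →
        c ≤ ∏ j ∈ F, ballRho (w j) (w k)) →
      (⨆ k : ℕ, ∑' j : ℕ,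
        if j = k then 0 else ENNReal.ofReal (1 - ballRho (w j) (w k) ^ 2)) < ⊤) := by
  obtain ⟨c₀, hc₀, hweak⟩ := hweak
  refine ⟨⟨iSup_tsum_one_sub_ballRho_sq_lt_top z hz, fun hsup => ?_⟩,
    iSup_tsum_one_sub_ballRho_sq_lt_top⟩
  obtain ⟨M, hM⟩ := (iSup_tsum_offDiag_lt_top_iff
    fun j k => one_sub_ballRho_sq_nonneg (hz j) (hz k)).1 hsup
  exact ⟨exp (-(M / c₀)), exp_pos _, fun k F hkF =>
    exp_neg_div_le_prod_of_sum_one_sub_sq_le hc₀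
      (fun j hj => hweak j k (ne_of_mem_of_not_mem hj hkF))
      (fun j _ => ballRho_le_one (hz j) (hz k)) (hM k F hkF)⟩
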